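/- arXiv:1009.5419 — 3 statements merged into one kernel-verified Lean document; each statement's English description precedes it below -/
import Mathlib

section
/- Let σ > 0, γ_T ≥ 0, and let (β_t) be a nondecreasing nonnegative sequence. Suppose (s_t) satisfies 0 ≤ s_t ≤ 1 and (1/2)∑_{t=1}^T log(1 + σ^{-2} s_t) ≤ γ_T. Then ∑_{t=1}^T √(β_t · s_t) ≤ √(T · C₁ · β_T · γ_T) with C₁ = 2/log(1 + σ^{-2}). -/
/-!
Concavity of `x ↦ log (1 + c x)` on `[0, 1]` gives `s_t log (1 + c) ≤ log (1 + c s_t)`, so the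
information bound controls `∑ s_t` linearly; monotonicity of `β` then bounds `∑ β_t s_t` by
`β_T ∑ s_t`, and Cauchy–Schwarz turns this into the bound on `∑ √(β_t s_t)`.
-/

open Finset Real

lemma Real.sum_sqrt_le_sqrt_card_mul_sum {ι : Type*} (u : Finset ι) {a : ι → ℝ}
    (ha : ∀ i, 0 ≤ a i) : ∑ i ∈ u, √(a i) ≤ √(#u * ∑ i ∈ u, a i) := by
  simpa [Real.sqrt_mul] using Real.sum_sqrt_mul_sqrt_le u (fun _ ↦ zero_le_one) ha

lemma Real.mul_log_one_add_le_log_one_add_mul {c x : ℝ} (hc : -1 < c) (hx0 : 0 ≤ x)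
    (hx1 : x ≤ 1) : x * log (1 + c) ≤ log (1 + c * x) := by
  have hpow : (1 + c) ^ x ≤ 1 + x * c := rpow_one_add_le_one_add_mul_self hc.le hx0 hx1
  rw [← log_rpow (by linarith), mul_comm c x]
  exact log_le_log (rpow_pos_of_pos (by linarith) x) hpow

lemma Real.sum_le_sum_log_one_add_mul_div {ι : Type*} (u : Finset ι) {c : ℝ} (hc : 0 < c)
    {s : ι → ℝ} (hs0 : ∀ i ∈ u, 0 ≤ s i) (hs1 : ∀ i ∈ u, s i ≤ 1) :
    ∑ i ∈ u, s i ≤ (∑ i ∈ u, log (1 + c * s i)) / log (1 + c) := by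
  rw [le_div_iff₀ (log_pos (by linarith)), sum_mul]
  exact sum_le_sum fun i hi ↦
    mul_log_one_add_le_log_one_add_mul (by linarith) (hs0 i hi) (hs1 i hi)

lemma Finset.sum_mul_le_mul_sum_of_monotone {ι : Type*} [Preorder ι] (u : Finset ι)
    {β s : ι → ℝ} (hβ : Monotone β) (hs : ∀ i ∈ u, 0 ≤ s i) {T : ι} (hu : ∀ i ∈ u, i ≤ T) :
    ∑ i ∈ u, β i * s i ≤ β T * ∑ i ∈ u, s i := by
  rw [mul_sum]
  exact sum_le_sum fun i hi ↦ mul_le_mul_of_nonneg_right (hβ (hu i hi)) (hs i hi)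

theorem stmt_2_general (σ γ : ℝ) (hσ : 0 < σ) (β s : ℕ → ℝ)
    (hβmono : Monotone β) (hβ0 : ∀ t, 0 ≤ β t)
    (hs0 : ∀ t, 0 ≤ s t) (hs1 : ∀ t, s t ≤ 1) (T : ℕ)
    (hinfo : (1 / 2) * ∑ t ∈ Finset.Icc 1 T, Real.log (1 + (σ ^ 2)⁻¹ * s t) ≤ γ) :
    ∑ t ∈ Finset.Icc 1 T, Real.sqrt (β t * s t) ≤
      Real.sqrt ((T : ℝ) * (2 / Real.log (1 + (σ ^ 2)⁻¹)) * β T * γ) := by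
  set c : ℝ := (σ ^ 2)⁻¹
  have hc : 0 < c := by positivity
  have hlog : 0 < log (1 + c) := log_pos (by linarith)
  have hterm : ∀ t, 0 ≤ β t * s t := fun t ↦ mul_nonneg (hβ0 t) (hs0 t)
  have hweighted : ∑ t ∈ Icc 1 T, β t * s t ≤ β T * (2 * γ / log (1 + c)) := calc
    _ ≤ β T * ∑ t ∈ Icc 1 T, s t :=
      sum_mul_le_mul_sum_of_monotone _ hβmono (fun t _ ↦ hs0 t) fun t ht ↦ (mem_Icc.1 ht).2
    _ ≤ β T * ((∑ t ∈ Icc 1 T, log (1 + c * s t)) / log (1 + c)) := by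
      gcongr
      · exact hβ0 T
      · exact sum_le_sum_log_one_add_mul_div _ hc (fun t _ ↦ hs0 t) fun t _ ↦ hs1 t
    _ ≤ β T * (2 * γ / log (1 + c)) := by
      gcongr
      · exact hβ0 T
      · linarith
  calc ∑ t ∈ Icc 1 T, √(β t * s t) ≤ √(#(Icc 1 T) * ∑ t ∈ Icc 1 T, β t * s t) :=
        sum_sqrt_le_sqrt_card_mul_sum _ hterm
    _ ≤ √(T * (β T * (2 * γ / log (1 + c)))) := by
      gcongr
      · exact sum_nonneg fun t _ ↦ hterm t
      · simp
    _ = √(T * (2 / log (1 + c)) * β T * γ) := by ring_nf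

theorem stmt_2 (σ γ : ℝ) (hσ : 0 < σ) (hγ : 0 ≤ γ) (β s : ℕ → ℝ)
    (hβmono : Monotone β) (hβ0 : ∀ t, 0 ≤ β t)
    (hs0 : ∀ t, 0 ≤ s t) (hs1 : ∀ t, s t ≤ 1) (T : ℕ)
    (hinfo : (1 / 2) * ∑ t ∈ Finset.Icc 1 T, Real.log (1 + (σ ^ 2)⁻¹ * s t) ≤ γ) :
    ∑ t ∈ Finset.Icc 1 T, Real.sqrt (β t * s t) ≤
      Real.sqrt ((T : ℝ) * (2 / Real.log (1 + (σ ^ 2)⁻¹)) * β T * γ) :=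
  stmt_2_general σ γ hσ β s hβmono hβ0 hs0 hs1 T hinfo
end

section
/- Let y_{1:T} = f_{1:T} + ε_{1:T} where f_{1:T} is a Gaussian vector and ε_t ~ N(0, σ²) are independent. If at each step the conditional (posterior) variance of f_t given y_{1:t-1} is σ²_{t-1}(x_t), then the mutual information satisfies I(y_{1:T}; f_{1:T}) = (1/2) ∑_{t=1}^T log(1 + σ^{-2} σ²_{t-1}(x_t)). -/
open Matrix

/-- Mutual information `I(y_{1:T}; f_{1:T})` for the Gaussian observation model
`y = f + ε`, `f ~ N(0, K)`, `ε ~ N(0, σ² I)`, given in closed form by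
`(1/2) log (det(K + σ² I) / det(σ² I))`. -/
noncomputable def gaussInfoGain (T : ℕ) (σ : ℝ) (K : Matrix (Fin T) (Fin T) ℝ) : ℝ :=
  (1 / 2) * Real.log ((K + σ ^ 2 • (1 : Matrix (Fin T) (Fin T) ℝ)).det / (σ ^ 2) ^ T)

/-- The posterior (conditional) variance of `f_t` given the noisy observations
`y_{1:t-1}`, computed from the covariance matrix `K` via the Schur complement. -/
noncomputable def postVar (T : ℕ) (σ : ℝ) (K : Matrix (Fin T) (Fin T) ℝ) (t : Fin T) : ℝ :=
  K t t - (fun i : Fin t.val => K (Fin.castLE t.isLt.le i) t) ⬝ᵥ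
    ((K.submatrix (Fin.castLE t.isLt.le) (Fin.castLE t.isLt.le) +
        σ ^ 2 • (1 : Matrix (Fin t.val) (Fin t.val) ℝ))⁻¹ *ᵥ
      (fun i : Fin t.val => K (Fin.castLE t.isLt.le i) t))

/-! With `M = K + σ² I`, the covariance of the observations, the Schur complement of the leading
`t × t` block of `M` in its leading `(t + 1) × (t + 1)` block is `σ² + σ²_{t-1}(x_t)`, the
conditional variance of `y_t` given `y_{1:t-1}`. Peeling off one row and column at a time with
the Schur determinant formula factors `det M` as the product of these conditional variances, and
the logarithm turns `det M / σ^{2T}` into the sum of the `log (1 + σ⁻² σ²_{t-1}(x_t))`. -/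

namespace Matrix

variable {R : Type*} [CommRing R]

noncomputable def leadingSchurComplement {T : ℕ} (M : Matrix (Fin T) (Fin T) R) (t : Fin T) : R :=
  M t t - (fun j : Fin t => M t (Fin.castLE t.isLt.le j)) ⬝ᵥ
    ((M.submatrix (Fin.castLE t.isLt.le) (Fin.castLE t.isLt.le))⁻¹ *ᵥ
      fun i : Fin t => M (Fin.castLE t.isLt.le i) t)

theorem det_eq_det_submatrix_castSucc_mul_leadingSchurComplement_last {n : ℕ}
    (N : Matrix (Fin (n + 1)) (Fin (n + 1)) R)
    (hA : IsUnit (N.submatrix Fin.castSucc Fin.castSucc).det) :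
    N.det = (N.submatrix Fin.castSucc Fin.castSucc).det *
      N.leadingSchurComplement (Fin.last n) := by
  set A := N.submatrix Fin.castSucc Fin.castSucc
  let := A.invertibleOfIsUnitDet hA
  have hblocks : N.submatrix finSumFinEquiv finSumFinEquiv =
      fromBlocks A (replicateCol (Fin 1) fun i => N i.castSucc (Fin.last n))
        (replicateRow (Fin 1) fun j => N (Fin.last n) j.castSucc)
        (of fun _ _ => N (Fin.last n) (Fin.last n)) := by
    ext (i | i) (j | j) <;> (try fin_cases i) <;> (try fin_cases j) <;> rfl
  rw [← det_submatrix_equiv_self finSumFinEquiv, hblocks, det_fromBlocks₁₁, det_fin_one,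
    invOf_eq_nonsing_inv, Matrix.mul_assoc, ← replicateCol_mulVec, replicateRow_mul_replicateCol]
  rfl

theorem det_submatrix_castLE_eq_prod_leadingSchurComplement {T : ℕ}
    (M : Matrix (Fin T) (Fin T) R)
    (hM : ∀ t : Fin T, IsUnit (M.submatrix (Fin.castLE t.isLt.le) (Fin.castLE t.isLt.le)).det) :
    ∀ n (h : n ≤ T), (M.submatrix (Fin.castLE h) (Fin.castLE h)).det =
      ∏ i : Fin n, M.leadingSchurComplement (Fin.castLE h i)
  | 0, _ => by simp
  | n + 1, h => by
    simp only [Fin.prod_univ_castSucc, Fin.castLE_castSucc]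
    rw [← det_submatrix_castLE_eq_prod_leadingSchurComplement M hM n,
      det_eq_det_submatrix_castSucc_mul_leadingSchurComplement_last _
        (hM ⟨n, h⟩)]
    rfl

theorem det_eq_prod_leadingSchurComplement {T : ℕ} (M : Matrix (Fin T) (Fin T) R)
    (hM : ∀ t : Fin T, IsUnit (M.submatrix (Fin.castLE t.isLt.le) (Fin.castLE t.isLt.le)).det) :
    M.det = ∏ t, M.leadingSchurComplement t := by
  simpa using M.det_submatrix_castLE_eq_prod_leadingSchurComplement hM T le_rfl

end Matrix

section GaussianProcess

variable {T : ℕ} {σ : ℝ} {K : Matrix (Fin T) (Fin T) ℝ}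

theorem isUnit_det_submatrix_castLE_add_smul_one (hσ : σ ≠ 0) (hK : K.PosSemidef) {n : ℕ}
    (h : n ≤ T) : IsUnit ((K + σ ^ 2 • (1 : Matrix (Fin T) (Fin T) ℝ)).submatrix
      (Fin.castLE h) (Fin.castLE h)).det := by
  have hM : (K + σ ^ 2 • (1 : Matrix (Fin T) (Fin T) ℝ)).PosDef :=
    PosDef.posSemidef_add hK (PosDef.one.smul (by positivity))
  exact (isUnit_iff_isUnit_det _).mp (hM.submatrix (Fin.castLE_injective h)).isUnit

theorem leadingSchurComplement_add_smul_one (hK : K.IsHermitian) (t : Fin T) :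
    (K + σ ^ 2 • (1 : Matrix (Fin T) (Fin T) ℝ)).leadingSchurComplement t =
      σ ^ 2 + postVar T σ K t := by
  have hne (i : Fin t) : Fin.castLE t.isLt.le i ≠ t :=
    fun h => (Fin.ext_iff.mp h ▸ i.isLt).false
  have hsub : (K + σ ^ 2 • (1 : Matrix (Fin T) (Fin T) ℝ)).submatrix
      (Fin.castLE t.isLt.le) (Fin.castLE t.isLt.le) =
      K.submatrix (Fin.castLE t.isLt.le) (Fin.castLE t.isLt.le) + σ ^ 2 • 1 := by
    rw [← submatrix_one _ (Fin.castLE_injective t.isLt.le)]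
    rfl
  have hrow : (fun j : Fin t => K t (Fin.castLE t.isLt.le j)) =
      fun j => K (Fin.castLE t.isLt.le j) t :=
    funext fun j => by simpa using (hK.apply t _).symm
  simp only [leadingSchurComplement, postVar, hsub, Matrix.add_apply, Matrix.smul_apply,
    one_apply_eq, one_apply_ne (hne _), one_apply_ne (hne _).symm, smul_eq_mul, mul_one,
    mul_zero, add_zero, hrow]
  ring

theorem det_add_smul_one_eq_prod_postVar (hσ : σ ≠ 0) (hK : K.PosSemidef) :
    (K + σ ^ 2 • (1 : Matrix (Fin T) (Fin T) ℝ)).det = ∏ t, (σ ^ 2 + postVar T σ K t) := by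
  simp only [det_eq_prod_leadingSchurComplement _
      (fun t => isUnit_det_submatrix_castLE_add_smul_one hσ hK t.isLt.le),
    leadingSchurComplement_add_smul_one hK.isHermitian]

theorem sq_add_postVar_ne_zero (hσ : σ ≠ 0) (hK : K.PosSemidef) (t : Fin T) :
    σ ^ 2 + postVar T σ K t ≠ 0 := by
  have hdet := (isUnit_det_submatrix_castLE_add_smul_one hσ hK le_rfl).ne_zero
  rw [Fin.castLE_rfl, submatrix_id_id, det_add_smul_one_eq_prod_postVar hσ hK] at hdet
  exact Finset.prod_ne_zero_iff.mp hdet t (Finset.mem_univ t)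

end GaussianProcess

theorem stmt_11 (T : ℕ) (σ : ℝ) (hσ : 0 < σ)
    (K : Matrix (Fin T) (Fin T) ℝ) (hK : K.PosSemidef) (s : Fin T → ℝ)
    (hs : ∀ t : Fin T, s t = postVar T σ K t) :
    gaussInfoGain T σ K = (1 / 2) * ∑ t : Fin T, Real.log (1 + (σ ^ 2)⁻¹ * s t) := by
  have hσ2 : σ ^ 2 ≠ 0 := by positivity
  rw [funext hs, gaussInfoGain, det_add_smul_one_eq_prod_postVar hσ.ne' hK,
    ← Fin.prod_const T (σ ^ 2), ← Finset.prod_div_distrib,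
    Real.log_prod fun t _ => div_ne_zero (sq_add_postVar_ne_zero hσ.ne' hK t) hσ2]
  congr 1
  refine Finset.sum_congr rfl fun t _ => ?_
  rw [add_div, div_self hσ2, div_eq_inv_mul]
end

section
/- Let A be a finite set and for each t ≥ 1 let x ↦ Z_t(x) be centered Gaussian variables with Var(Z_t(x)) = σ²_{t-1}(x). Fix δ ∈ (0,1), choose π_t > 0 with ∑_t π_t^{-1} = 1 (e.g. π_t = π²t²/6), and set β_t = 2 log(|A| π_t / δ). Then with probability at least 1 − δ, |Z_t(x)| ≤ √β_t · σ_{t-1}(x) for all x ∈ A and all t ≥ 1. -/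
/-!
Comparing densities on `[c, ∞)`, the density of `N(0, v)` is at most `exp (-c² / 2v)` times that
of `N(c, v)`, which gives `ℙ(X ≥ c) ≤ exp (-c² / 2v) / 2`; by symmetry `ℙ(|X| > c) ≤ exp (-c² / 2v)`.
For `c = √β_t σ_{t-1}(x)` this is `δ / (|A| π_t)`, and a union bound over `x ∈ A` and `t ≥ 1` sums
these failure probabilities to `δ`.
-/

namespace ProbabilityTheory

open MeasureTheory Set Real NNReal

variable {μ c : ℝ} {v : ℝ≥0}

lemma gaussianReal_Ici_self (hv : v ≠ 0) : gaussianReal μ v (Ici μ) = 2⁻¹ := by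
  have : NullSingletonClass (gaussianReal μ v) :=
    ⟨fun x ↦ gaussianReal_absolutelyContinuous μ hv (measure_singleton x)⟩
  have hsymm : gaussianReal μ v (Iic μ) = gaussianReal μ v (Ici μ) := by
    have hreflect : (gaussianReal μ v).map (2 * μ - ·) = gaussianReal μ v := by
      rw [gaussianReal_map_const_sub]; ring_nf
    conv_lhs => rw [← hreflect]
    rw [Measure.map_apply (by fun_prop) measurableSet_Iic]
    congr 1
    ext x
    simp only [mem_preimage, mem_Iic, mem_Ici]
    constructor <;> intro <;> linarith
  have htotal : gaussianReal μ v (Iic μ) + gaussianReal μ v (Ici μ) = 1 := by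
    rw [← measure_congr Ioi_ae_eq_Ici, ← compl_Iic, measure_add_measure_compl measurableSet_Iic,
      measure_univ]
  rw [hsymm, ← two_mul] at htotal
  exact ENNReal.eq_inv_of_mul_eq_one_left (by rwa [mul_comm])

lemma gaussianPDFReal_zero_le_exp_mul {x : ℝ} (hc : 0 ≤ c) (hx : c ≤ x) :
    gaussianPDFReal 0 v x ≤ exp (-c ^ 2 / (2 * v)) * gaussianPDFReal c v x := by
  simp only [gaussianPDFReal, sub_zero]
  rw [mul_left_comm, ← exp_add]
  gcongr
  -- the exponents differ by `c (x - c) / v ≥ 0`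
  rcases eq_or_ne v 0 with rfl | hv
  · simp
  have : (0 : ℝ) < v := by positivity
  rw [← add_div, div_le_div_iff_of_pos_right (by positivity)]
  nlinarith [mul_nonneg hc (sub_nonneg.2 hx)]

lemma gaussianReal_Ici_le (hv : v ≠ 0) (hc : 0 ≤ c) :
    gaussianReal 0 v (Ici c) ≤ ENNReal.ofReal (exp (-c ^ 2 / (2 * v))) * 2⁻¹ := by
  rw [← gaussianReal_Ici_self hv, gaussianReal_apply 0 hv, gaussianReal_apply c hv,
    ← lintegral_const_mul _ (measurable_gaussianPDF c v)]
  refine setLIntegral_mono ((measurable_gaussianPDF c v).const_mul _) fun x hx ↦ ?_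
  rw [gaussianPDF, gaussianPDF, ← ENNReal.ofReal_mul (by positivity)]
  exact ENNReal.ofReal_le_ofReal (gaussianPDFReal_zero_le_exp_mul hc hx)

lemma gaussianReal_abs_gt_le (hv : v ≠ 0) (hc : 0 ≤ c) :
    gaussianReal 0 v {y | c < |y|} ≤ ENNReal.ofReal (exp (-c ^ 2 / (2 * v))) := by
  have hsplit : {y : ℝ | c < |y|} ⊆ Iic (-c) ∪ Ici c := by
    intro y (hy : c < |y|)
    rcases abs_cases y with ⟨h, _⟩ | ⟨h, _⟩
    · right; simp only [mem_Ici]; linarith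
    · left; simp only [mem_Iic]; linarith
  have hreflect : gaussianReal 0 v (Iic (-c)) = gaussianReal 0 v (Ici c) := by
    conv_lhs => rw [← neg_zero, ← gaussianReal_map_neg]
    rw [Measure.map_apply (by fun_prop) measurableSet_Iic]
    congr 1
    ext x
    simp
  calc gaussianReal 0 v {y | c < |y|}
      ≤ gaussianReal 0 v (Iic (-c)) + gaussianReal 0 v (Ici c) :=
        (measure_mono hsplit).trans (measure_union_le _ _)
    _ = 2 * gaussianReal 0 v (Ici c) := by rw [hreflect, two_mul]
    _ ≤ 2 * (ENNReal.ofReal (exp (-c ^ 2 / (2 * v))) * 2⁻¹) := by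
        gcongr; exact gaussianReal_Ici_le hv hc
    _ = ENNReal.ofReal (exp (-c ^ 2 / (2 * v))) := by
        rw [mul_comm, mul_assoc, ENNReal.inv_mul_cancel two_ne_zero ENNReal.ofNat_ne_top, mul_one]

lemma gaussianReal_abs_gt_sqrt_mul_le (v : ℝ≥0) (β : ℝ) :
    gaussianReal 0 v {y | √(β * v) < |y|} ≤ ENNReal.ofReal (exp (-β / 2)) := by
  rcases eq_or_ne v 0 with rfl | hv
  · simp [gaussianReal_zero_var]
  rcases lt_or_ge β 0 with hβ | hβ
  · refine prob_le_one.trans ?_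
    rw [← ENNReal.ofReal_one]
    exact ENNReal.ofReal_le_ofReal (one_le_exp (by linarith))
  have hv' : (0 : ℝ) < v := by positivity
  refine (gaussianReal_abs_gt_le hv (sqrt_nonneg _)).trans_eq ?_
  rw [sq_sqrt (by positivity)]
  congr 2
  field_simp

lemma measure_abs_gt_sqrt_mul_le_of_map_eq_gaussianReal {Ω : Type*} [MeasurableSpace Ω]
    {P : Measure Ω} [IsProbabilityMeasure P] {X : Ω → ℝ} (hX : P.map X = gaussianReal 0 v)
    (β : ℝ) : P {ω | √(β * v) < |X ω|} ≤ ENNReal.ofReal (exp (-β / 2)) := by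
  have hXm : AEMeasurable X P := .of_map_ne_zero (hX ▸ IsProbabilityMeasure.ne_zero _)
  refine le_of_eq_of_le ?_ (gaussianReal_abs_gt_sqrt_mul_le v β)
  rw [← hX, Measure.map_apply_of_aemeasurable hXm (measurableSet_lt measurable_const measurable_abs)]
  rfl

lemma measure_abs_gt_sqrt_two_mul_log_mul_le {Ω : Type*} [MeasurableSpace Ω]
    {P : Measure Ω} [IsProbabilityMeasure P] {X : Ω → ℝ} {s a : ℝ}
    (hX : P.map X = gaussianReal 0 ⟨s ^ 2, sq_nonneg s⟩) (hs : 0 ≤ s) (ha : 0 < a) :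
    P {ω | √(2 * log a) * s < |X ω|} ≤ ENNReal.ofReal a⁻¹ := by
  have htail : P {ω | √(2 * log a * s ^ 2) < |X ω|} ≤ _ :=
    measure_abs_gt_sqrt_mul_le_of_map_eq_gaussianReal hX (2 * log a)
  rwa [sqrt_mul' _ (sq_nonneg _), sqrt_sq hs, neg_div, mul_div_cancel_left₀ _ two_ne_zero,
    exp_neg, exp_log ha] at htail

end ProbabilityTheory

namespace MeasureTheory

open Set

lemma one_sub_tsum_le_measure_iInter_compl {Ω ι : Type*} [MeasurableSpace Ω] [Countable ι]
    (P : Measure Ω) [IsProbabilityMeasure P] (B : ι → Set Ω) :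
    1 - ∑' i, P (B i) ≤ P (⋂ i, (B i)ᶜ) := by
  calc 1 - ∑' i, P (B i) ≤ 1 - P (⋃ i, B i) := tsub_le_tsub_left (measure_iUnion_le B) 1
    _ ≤ P (⋂ i, (B i)ᶜ) := by
      rw [tsub_le_iff_right, ← compl_iUnion, ← measure_univ (μ := P), add_comm]
      exact measure_univ_le_add_compl _

end MeasureTheory

lemma ENNReal.tsum_prod_le_tsum_of_le_div_card {ι A : Type*} [Fintype A] {f : ι × A → ENNReal}
    {ε : ι → ENNReal} (hf : ∀ i a, f (i, a) ≤ ε i / Fintype.card A) :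
    ∑' p, f p ≤ ∑' i, ε i := by
  rw [ENNReal.tsum_prod']
  refine ENNReal.tsum_le_tsum fun i ↦ ?_
  calc ∑' a, f (i, a) ≤ ∑ _a : A, ε i / Fintype.card A := by
        rw [tsum_fintype]; exact Finset.sum_le_sum fun a _ ↦ hf i a
    _ ≤ ε i := by
        rw [Finset.sum_const, nsmul_eq_mul, Finset.card_univ]
        exact ENNReal.mul_div_le

open ProbabilityTheory MeasureTheory

theorem stmt_12_general {A : Type*} [Fintype A]
    {Ω : Type*} [MeasureSpace Ω] (P : Measure Ω) [IsProbabilityMeasure P]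
    (Z : ℕ → A → Ω → ℝ)
    (s : ℕ → A → ℝ) (hs : ∀ t x, 0 ≤ s t x)
    (hGauss : ∀ t x, Measure.map (Z t x) P = gaussianReal 0 ⟨(s t x) ^ 2, sq_nonneg _⟩)
    (δ : ℝ) (hδ : δ ∈ Set.Ioo (0 : ℝ) 1)
    (π : ℕ → ℝ) (hπ : ∀ t, 1 ≤ t → 0 < π t) (hπsum : ∑' t : ℕ, (π (t + 1))⁻¹ = 1)
    (β : ℕ → ℝ) (hβ : ∀ t, β t = 2 * Real.log ((Fintype.card A : ℝ) * π t / δ)) :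
    ENNReal.ofReal (1 - δ) ≤
      P {ω | ∀ (t : ℕ), 1 ≤ t → ∀ x : A, |Z t x ω| ≤ Real.sqrt (β t) * s t x} := by
  obtain ⟨hδ0, -⟩ := hδ
  let B : ℕ × A → Set Ω := fun p ↦
    {ω | √(β (p.1 + 1)) * s (p.1 + 1) p.2 < |Z (p.1 + 1) p.2 ω|}
  have hB : ∀ n x, P (B (n, x)) ≤ ENNReal.ofReal (δ * (π (n + 1))⁻¹) / Fintype.card A := by
    intro n x
    have hcard : (0 : ℝ) < Fintype.card A := by exact_mod_cast Fintype.card_pos_iff.2 ⟨x⟩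
    have hπn := hπ (n + 1) (Nat.le_add_left 1 n)
    refine (hβ (n + 1) ▸ measure_abs_gt_sqrt_two_mul_log_mul_le (hGauss (n + 1) x) (hs _ _)
      (by positivity)).trans_eq ?_
    rw [← ENNReal.ofReal_natCast, ← ENNReal.ofReal_div_of_pos hcard]
    congr 1
    field_simp
  have hsummable : Summable fun n ↦ (π (n + 1))⁻¹ := by
    by_contra h
    simp [tsum_eq_zero_of_not_summable h] at hπsum
  have hsum : ∑' p, P (B p) ≤ ENNReal.ofReal δ := by
    refine (ENNReal.tsum_prod_le_tsum_of_le_div_card hB).trans_eq ?_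
    rw [← ENNReal.ofReal_tsum_of_nonneg
      (fun n ↦ mul_nonneg hδ0.le (inv_nonneg.2 (hπ (n + 1) (by omega)).le))
      (hsummable.mul_left δ), tsum_mul_left, hπsum, mul_one]
  calc ENNReal.ofReal (1 - δ) = 1 - ENNReal.ofReal δ := by
        rw [ENNReal.ofReal_sub _ hδ0.le, ENNReal.ofReal_one]
    _ ≤ 1 - ∑' p, P (B p) := tsub_le_tsub_left hsum 1
    _ ≤ P (⋂ p, (B p)ᶜ) := one_sub_tsum_le_measure_iInter_compl P B
    _ ≤ _ := by
        refine measure_mono fun ω hω t ht x ↦ ?_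
        obtain ⟨n, rfl⟩ := Nat.exists_eq_add_of_le' ht
        exact not_lt.1 (Set.mem_iInter.1 hω (n, x))

theorem stmt_12 {A : Type*} [Fintype A] [Nonempty A]
    {Ω : Type*} [MeasureSpace Ω] (P : Measure Ω) [IsProbabilityMeasure P]
    (Z : ℕ → A → Ω → ℝ) (hZmeas : ∀ t x, Measurable (Z t x))
    (s : ℕ → A → ℝ) (hs : ∀ t x, 0 ≤ s t x)
    (hGauss : ∀ t x, Measure.map (Z t x) P = gaussianReal 0 ⟨(s t x) ^ 2, sq_nonneg _⟩)
    (δ : ℝ) (hδ : δ ∈ Set.Ioo (0 : ℝ) 1)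
    (π : ℕ → ℝ) (hπ : ∀ t, 1 ≤ t → 0 < π t) (hπsum : ∑' t : ℕ, (π (t + 1))⁻¹ = 1)
    (β : ℕ → ℝ) (hβ : ∀ t, β t = 2 * Real.log ((Fintype.card A : ℝ) * π t / δ)) :
    ENNReal.ofReal (1 - δ) ≤
      P {ω | ∀ (t : ℕ), 1 ≤ t → ∀ x : A, |Z t x ω| ≤ Real.sqrt (β t) * s t x} :=
  stmt_12_general P Z s hs hGauss δ hδ π hπ hπsum β hβ
end
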